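/- Let w be a word over S × {±1} and let w' be obtained from w by a single adjacent transposition swapping two consecutive letters (r, ε) and (s, δ) with r ≠ s (so w = u ++ [(r,ε),(s,δ)] ++ v and w' = u ++ [(s,δ),(r,ε)] ++ v). Then e_{rs}(w') = e_{rs}(w) − ε·δ and e_{sr}(w') = e_{sr}(w) + ε·δ, while e_{tt'}(w') = e_{tt'}(w) for any pair (t, t') with {t, t'} ≠ {r, s}. -/
import Mathlib


/-- Signed count of occurrences of the letter `r` in the word `w`. -/
def aC {S : Type*} [DecidableEq S] (r : S) (w : List (S × ℤ)) : ℤ :=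
  (w.map fun p => if p.1 = r then p.2 else 0).sum

/-- Signed count of `rs`-decompositions: sum over pairs `i < j` with letter `r`
at `i` and letter `s` at `j` of the product of the attached signs. -/
def eC {S : Type*} [DecidableEq S] (r s : S) : List (S × ℤ) → ℤ
  | [] => 0
  | p :: w => (if p.1 = r then p.2 * aC s w else 0) + eC r s w

/-- A word over `S × {±1}`: every sign is `1` or `-1`. -/
def IsWord {S : Type*} (w : List (S × ℤ)) : Prop := ∀ p ∈ w, p.2 = 1 ∨ p.2 = -1

lemma aC_append {S : Type*} [DecidableEq S] (r : S) (u v : List (S × ℤ)) :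
    aC r (u ++ v) = aC r u + aC r v := by
  simp [aC]

lemma aC_cons {S : Type*} [DecidableEq S] (r : S) (p : S × ℤ) (u : List (S × ℤ)) :
    aC r (p :: u) = (if p.1 = r then p.2 else 0) + aC r u := by
  simp [aC]

lemma eC_append {S : Type*} [DecidableEq S] (r s : S) (u v : List (S × ℤ)) :
    eC r s (u ++ v) = eC r s u + aC r u * aC s v + eC r s v := by
  induction u with
  | nil => simp [eC, aC]
  | cons p u ih =>
    simp only [List.cons_append, eC, aC_append, List.append_eq]
    rw [ih]
    by_cases h : p.1 = r <;> simp [h, aC_cons] <;> ring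

lemma eC_sandwich {S : Type*} [DecidableEq S] (r s : S) (u m v : List (S × ℤ)) :
    eC r s (u ++ m ++ v) = eC r s u + aC r u * (aC s m + aC s v)
      + eC r s m + aC r m * aC s v + eC r s v := by
  rw [List.append_assoc, eC_append, eC_append, aC_append]; ring

theorem eC_adjacent_transposition {S : Type*} [DecidableEq S]
    (u v : List (S × ℤ)) (hu : IsWord u) (hv : IsWord v)
    (r s : S) (hrs : r ≠ s) (ε δ : ℤ)
    (hε : ε = 1 ∨ ε = -1) (hδ : δ = 1 ∨ δ = -1) :
    eC r s (u ++ [(s, δ), (r, ε)] ++ v) = eC r s (u ++ [(r, ε), (s, δ)] ++ v) - ε * δ ∧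
    eC s r (u ++ [(s, δ), (r, ε)] ++ v) = eC s r (u ++ [(r, ε), (s, δ)] ++ v) + ε * δ ∧
    ∀ t t' : S, ({t, t'} : Set S) ≠ ({r, s} : Set S) →
      eC t t' (u ++ [(s, δ), (r, ε)] ++ v) = eC t t' (u ++ [(r, ε), (s, δ)] ++ v) := by
  have key : ∀ t t' : S, eC t t' (u ++ [(s, δ), (r, ε)] ++ v)
      - eC t t' (u ++ [(r, ε), (s, δ)] ++ v)
      = eC t t' [(s, δ), (r, ε)] - eC t t' [(r, ε), (s, δ)] := by
    intro t t'
    rw [eC_sandwich, eC_sandwich]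
    have h1 : aC t' ([(s, δ), (r, ε)] : List (S × ℤ)) = aC t' [(r, ε), (s, δ)] := by
      simp [aC]; ring
    have h2 : aC t ([(s, δ), (r, ε)] : List (S × ℤ)) = aC t [(r, ε), (s, δ)] := by
      simp [aC]; ring
    rw [h1, h2]; ring
  have e1 : eC r s ([(s, δ), (r, ε)] : List (S × ℤ)) = 0 := by
    simp [eC, aC, hrs, hrs.symm]
  have e2 : eC r s ([(r, ε), (s, δ)] : List (S × ℤ)) = ε * δ := by
    simp [eC, aC, hrs, hrs.symm]
  have e3 : eC s r ([(s, δ), (r, ε)] : List (S × ℤ)) = δ * ε := by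
    simp [eC, aC, hrs, hrs.symm]
  have e4 : eC s r ([(r, ε), (s, δ)] : List (S × ℤ)) = 0 := by
    simp [eC, aC, hrs, hrs.symm]
  refine ⟨by have := key r s; rw [e1, e2] at this; linarith,
    by have := key s r; rw [e3, e4] at this; linarith, ?_⟩
  intro t t' htt
  have hn1 : ¬(t = r ∧ t' = s) := by
    rintro ⟨rfl, rfl⟩; exact htt rfl
  have hn2 : ¬(t = s ∧ t' = r) := by
    rintro ⟨rfl, rfl⟩
    exact htt (by ext x; simp [Set.mem_insert_iff]; tauto)
  have f1 : eC t t' ([(s, δ), (r, ε)] : List (S × ℤ)) = 0 := by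
    simp only [eC, aC, List.map_cons, List.map_nil, List.sum_cons, List.sum_nil]
    by_cases h1 : s = t <;> by_cases h2 : r = t' <;>
      simp_all <;> exact hn2 ⟨h1.symm, h2.symm⟩
  have f2 : eC t t' ([(r, ε), (s, δ)] : List (S × ℤ)) = 0 := by
    simp only [eC, aC, List.map_cons, List.map_nil, List.sum_cons, List.sum_nil]
    by_cases h1 : r = t <;> by_cases h2 : s = t' <;>
      simp_all <;> exact hn1 ⟨h1.symm, h2.symm⟩
  have := key t t'; rw [f1, f2] at this; linarith
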